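/- (One-step decrease for exact FedDANE with a single selected device, convex case.) Fix w₀ ∈ ℝ^d, μ > 0 and B ≥ 1. Suppose each F_k is convex with L-Lipschitz gradient, f has L-Lipschitz gradient, and Σ_{k=1}^N p_k ‖∇F_k(w₀)‖² ≤ B² ‖∇f(w₀)‖². Take g = ∇f(w₀) (the exact full gradient) and for each device k let w̲_k be the exact minimizer of the FedDANE subproblem P_k with base point w₀, gradient estimate g and penalty μ. Then Σ_{k=1}^N p_k f(w̲_k) ≤ f(w₀) − (1/μ − 5L/(2μ²) − 2L(B² − 1)/μ²) ‖∇f(w₀)‖²; in particular, if μ = 5LB² then Σ_{k=1}^N p_k f(w̲_k) ≤ f(w₀) − ((6B² − 1)/(50LB⁴)) ‖∇f(w₀)‖². -/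

import Mathlib

/-!
Put `Δ = w̲_k - w₀` and `e = ∇F_k(w₀) - ∇F_k(w̲_k)`. Since `g = ∇f(w₀)`, the optimality condition
of `P_k` reads `μ Δ = e - ∇f(w₀)`. Convexity of `F_k` makes its gradient monotone, so
`⟪e, Δ⟫ ≤ 0`, which forces `‖Δ‖ ≤ ‖∇f(w₀)‖ / μ`; together with `‖e‖ ≤ L ‖Δ‖` this bounds the
first-order and quadratic terms of the descent inequality
`f(w̲_k) ≤ f(w₀) + ⟪∇f(w₀), Δ⟫ + L ‖Δ‖²`, so that every device alone already achieves
`f(w̲_k) ≤ f(w₀) - (1/μ - 2L/μ²) ‖∇f(w₀)‖²`. For `B ≥ 1` this coefficient dominates the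
claimed one, and averaging over the devices finishes the proof.
-/

open scoped RealInnerProductSpace
open Set InnerProductSpace

theorem sum_mul_le_of_forall_le {ι R : Type*} [Semiring R] [PartialOrder R] [IsOrderedRing R]
    {s : Finset ι} {p a : ι → R} {c : R} (hp : ∀ k ∈ s, 0 ≤ p k) (hpsum : ∑ k ∈ s, p k = 1)
    (h : ∀ k ∈ s, a k ≤ c) : ∑ k ∈ s, p k * a k ≤ c :=
  calc ∑ k ∈ s, p k * a k
      ≤ ∑ k ∈ s, p k * c :=
        Finset.sum_le_sum fun k hk => mul_le_mul_of_nonneg_left (h k hk) (hp k hk)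
    _ = c := by rw [← Finset.sum_mul, hpsum, one_mul]

section InnerProductSpace

variable {E : Type*} [NormedAddCommGroup E] [InnerProductSpace ℝ E]

theorem inner_add_mul_norm_sq_le_of_smul_eq_sub {g e Δ : E} {μ L : ℝ} (hμ : 0 < μ)
    (hL : 0 ≤ L) (hstep : μ • Δ = e - g) (he : ‖e‖ ≤ L * ‖Δ‖) (hmono : ⟪e, Δ⟫ ≤ 0) :
    ⟪g, Δ⟫ + L * ‖Δ‖ ^ 2 ≤ -(1 / μ - 2 * L / μ ^ 2) * ‖g‖ ^ 2 := by
  have hΔ : μ * ‖Δ‖ ≤ ‖g‖ := by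
    have hsq : μ * ‖Δ‖ ^ 2 = ⟪e, Δ⟫ - ⟪g, Δ⟫ := by
      rw [← real_inner_self_eq_norm_sq, ← real_inner_smul_left, hstep, inner_sub_left]
    have hcs : -⟪g, Δ⟫ ≤ ‖g‖ * ‖Δ‖ := (neg_le_abs _).trans (abs_real_inner_le_norm g Δ)
    nlinarith [norm_nonneg Δ, norm_nonneg g]
  have hgΔ : μ * ⟪g, Δ⟫ ≤ L * ‖g‖ * ‖Δ‖ - ‖g‖ ^ 2 := by
    have hinner : μ * ⟪g, Δ⟫ = ⟪g, e⟫ - ‖g‖ ^ 2 := by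
      rw [← real_inner_self_eq_norm_sq, ← real_inner_smul_right, hstep, inner_sub_right]
    have hcs : ⟪g, e⟫ ≤ ‖g‖ * (L * ‖Δ‖) :=
      (real_inner_le_norm g e).trans (mul_le_mul_of_nonneg_left he (norm_nonneg g))
    linarith
  have hrhs : μ ^ 2 * (-(1 / μ - 2 * L / μ ^ 2) * ‖g‖ ^ 2) = (2 * L - μ) * ‖g‖ ^ 2 := by
    field_simp; ring
  refine le_of_mul_le_mul_left ?_ (pow_pos hμ 2)
  rw [hrhs]
  nlinarith [mul_le_mul_of_nonneg_left hΔ (mul_nonneg hL (norm_nonneg g)),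
    mul_le_mul hΔ hΔ (by positivity) (norm_nonneg g)]

variable [CompleteSpace E]

theorem ConvexOn.add_inner_gradient_le {F : E → ℝ} (hc : ConvexOn ℝ univ F) {x : E}
    (hd : DifferentiableAt ℝ F x) (y : E) : F x + ⟪gradient F x, y - x⟫ ≤ F y := by
  let line : ℝ →ᵃ[ℝ] E := AffineMap.lineMap x y
  have hφ : ConvexOn ℝ univ (F ∘ line) := by
    simpa only [preimage_univ] using hc.comp_affineMap line
  have hF : HasFDerivAt F (toDual ℝ E (gradient F x)) (line 0) := by
    simpa [line] using hd.hasGradientAt.hasFDerivAt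
  have hderiv : HasDerivAt (F ∘ line) ⟪gradient F x, y - x⟫ 0 := by
    simpa only [toDual_apply_apply] using hF.comp_hasDerivAt 0 AffineMap.hasDerivAt_lineMap
  have hslope := hφ.le_slope_of_hasDerivAt (mem_univ 0) (mem_univ 1) zero_lt_one hderiv
  simp only [slope_def_field, Function.comp_apply, line, AffineMap.lineMap_apply_zero,
    AffineMap.lineMap_apply_one, sub_zero, div_one] at hslope
  linarith

theorem ConvexOn.inner_gradient_sub_gradient_nonneg {F : E → ℝ} (hc : ConvexOn ℝ univ F)
    {x y : E} (hx : DifferentiableAt ℝ F x) (hy : DifferentiableAt ℝ F y) :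
    0 ≤ ⟪gradient F x - gradient F y, x - y⟫ := by
  have hxy := hc.add_inner_gradient_le hx y
  have hyx := hc.add_inner_gradient_le hy x
  rw [← neg_sub x y, inner_neg_right] at hxy
  rw [inner_sub_left]
  linarith

theorem le_add_inner_gradient_add_mul_norm_sq {f : E → ℝ} (hd : Differentiable ℝ f) {L : ℝ}
    (hL : 0 ≤ L) (hlip : ∀ a b, ‖gradient f a - gradient f b‖ ≤ L * ‖a - b‖) (x y : E) :
    f y ≤ f x + ⟪gradient f x, y - x⟫ + L * ‖y - x‖ ^ 2 := by
  let q : E → ℝ := fun w => f w - toDual ℝ E (gradient f x) w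
  have hq : ∀ w, HasFDerivAt q (toDual ℝ E (gradient f w) - toDual ℝ E (gradient f x)) w :=
    fun w => (hd w).hasGradientAt.hasFDerivAt.sub (toDual ℝ E (gradient f x)).hasFDerivAt
  have hbound : ∀ w ∈ segment ℝ x y,
      ‖toDual ℝ E (gradient f w) - toDual ℝ E (gradient f x)‖ ≤ L * ‖y - x‖ := by
    rintro w ⟨a, b, ha, hb, hab, rfl⟩
    rw [← map_sub, LinearIsometryEquiv.norm_map]
    have : a • x + b • y - x = b • (y - x) := by
      obtain rfl : a = 1 - b := by linarith
      module
    calc _ ≤ L * ‖a • x + b • y - x‖ := hlip _ _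
      _ ≤ L * ‖y - x‖ := by
        rw [this, norm_smul, Real.norm_of_nonneg hb]
        gcongr
        exact mul_le_of_le_one_left (norm_nonneg _) (by linarith)
  have hmv := (convex_segment x y).norm_image_sub_le_of_norm_hasFDerivWithin_le
    (fun w _ => (hq w).hasFDerivWithinAt) hbound (left_mem_segment ℝ x y)
    (right_mem_segment ℝ x y)
  have : q y - q x = f y - f x - ⟪gradient f x, y - x⟫ := by
    simp only [q, toDual_apply_apply, inner_sub_right]; ring
  rw [this, Real.norm_eq_abs] at hmv
  nlinarith [le_abs_self (f y - f x - ⟪gradient f x, y - x⟫)]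

theorem IsLocalMin.gradient_add_add_smul_sub_eq_zero {F : E → ℝ} {c w₀ x : E} {μ : ℝ}
    (hmin : IsLocalMin (fun w => F w + ⟪c, w - w₀⟫ + μ / 2 * ‖w - w₀‖ ^ 2) x)
    (hd : DifferentiableAt ℝ F x) :
    gradient F x + c + μ • (x - w₀) = 0 := by
  have hsub : HasFDerivAt (fun w : E => w - w₀) (ContinuousLinearMap.id ℝ E) x :=
    (hasFDerivAt_id x).sub_const w₀
  have hP := (hd.hasGradientAt.hasFDerivAt.add ((hasFDerivAt_const c x).inner ℝ hsub)).add
    (hsub.norm_sq.const_mul (μ / 2))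
  obtain ⟨v, hv⟩ : ∃ v, v = gradient F x + c + μ • (x - w₀) := ⟨_, rfl⟩
  have hderiv_v := congr($(hmin.hasFDerivAt_eq_zero hP) v)
  simp only [add_apply, ContinuousLinearMap.comp_apply, ContinuousLinearMap.prod_apply,
    zero_apply, ContinuousLinearMap.id_apply, smul_apply, fderivInnerCLM_apply,
    innerSL_apply_apply, toDual_apply_apply, inner_zero_left, smul_eq_mul, nsmul_eq_mul] at hderiv_v
  rw [← hv, ← inner_self_eq_zero (𝕜 := ℝ)]
  nth_rewrite 1 [hv]
  rw [inner_add_left, inner_add_left, real_inner_smul_left]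
  linear_combination hderiv_v

noncomputable def feddaneSubproblem (F : E → ℝ) (g w₀ : E) (μ : ℝ) (w : E) : ℝ :=
  F w + ⟪g - gradient F w₀, w - w₀⟫ + μ / 2 * ‖w - w₀‖ ^ 2

theorem le_sub_mul_norm_sq_of_isLocalMin_feddaneSubproblem {F f : E → ℝ} {w₀ x : E} {μ L : ℝ}
    (hμ : 0 < μ) (hL : 0 ≤ L) (hFc : ConvexOn ℝ univ F) (hFd : Differentiable ℝ F)
    (hFlip : ‖gradient F w₀ - gradient F x‖ ≤ L * ‖w₀ - x‖) (hfd : Differentiable ℝ f)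
    (hflip : ∀ a b, ‖gradient f a - gradient f b‖ ≤ L * ‖a - b‖)
    (hmin : IsLocalMin (feddaneSubproblem F (gradient f w₀) w₀ μ) x) :
    f x ≤ f w₀ - (1 / μ - 2 * L / μ ^ 2) * ‖gradient f w₀‖ ^ 2 := by
  have hopt := hmin.gradient_add_add_smul_sub_eq_zero (hFd x)
  have hstep : μ • (x - w₀) = (gradient F w₀ - gradient F x) - gradient f w₀ := by
    linear_combination (norm := module) hopt
  have hmono : ⟪gradient F w₀ - gradient F x, x - w₀⟫ ≤ 0 := by
    have := hFc.inner_gradient_sub_gradient_nonneg (hFd w₀) (hFd x)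
    rw [← neg_sub w₀ x, inner_neg_right]
    linarith
  rw [norm_sub_rev w₀ x] at hFlip
  linarith [inner_add_mul_norm_sq_le_of_smul_eq_sub hμ hL hstep hFlip hmono,
    le_add_inner_gradient_add_mul_norm_sq hfd hL hflip w₀ x]

end InnerProductSpace

theorem feddane_exact_one_step_decrease_general {d N : ℕ}
    (F : Fin N → EuclideanSpace ℝ (Fin d) → ℝ) (hF : ∀ k, ContDiff ℝ 1 (F k))
    (p : Fin N → ℝ) (hp : ∀ k, 0 ≤ p k) (hpsum : ∑ k, p k = 1)
    (f : EuclideanSpace ℝ (Fin d) → ℝ) (hf : f = fun w => ∑ k, p k * F k w)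
    (w₀ : EuclideanSpace ℝ (Fin d)) (μ L B : ℝ)
    (hμ : 0 < μ) (hL : 0 < L) (hB : 1 ≤ B)
    (hconv : ∀ k, ConvexOn ℝ Set.univ (F k))
    (hFlip : ∀ k x y, ‖gradient (F k) x - gradient (F k) y‖ ≤ L * ‖x - y‖)
    (hflip : ∀ x y, ‖gradient f x - gradient f y‖ ≤ L * ‖x - y‖)
    (g : EuclideanSpace ℝ (Fin d)) (hg : g = gradient f w₀)
    (P : Fin N → EuclideanSpace ℝ (Fin d) → ℝ)
    (hP : P = fun k w =>
      F k w + ⟪g - gradient (F k) w₀, w - w₀⟫ + μ / 2 * ‖w - w₀‖ ^ 2)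
    (wbar : Fin N → EuclideanSpace ℝ (Fin d))
    (hmin : ∀ k v, P k (wbar k) ≤ P k v) :
    (∑ k, p k * f (wbar k)) ≤
        f w₀ - (1 / μ - 5 * L / (2 * μ ^ 2) - 2 * L * (B ^ 2 - 1) / μ ^ 2) *
          ‖gradient f w₀‖ ^ 2 ∧
      (μ = 5 * L * B ^ 2 →
        (∑ k, p k * f (wbar k)) ≤
          f w₀ - (6 * B ^ 2 - 1) / (50 * L * B ^ 4) * ‖gradient f w₀‖ ^ 2) := by
  have hfd : Differentiable ℝ f := by
    subst hf
    exact Differentiable.fun_sum fun k _ => ((hF k).differentiable one_ne_zero).const_mul _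
  have hdevice : ∀ k,
      f (wbar k) ≤ f w₀ - (1 / μ - 2 * L / μ ^ 2) * ‖gradient f w₀‖ ^ 2 := fun k => by
    refine le_sub_mul_norm_sq_of_isLocalMin_feddaneSubproblem hμ hL.le (hconv k)
      ((hF k).differentiable one_ne_zero) (hFlip k _ _) hfd hflip
      (Filter.Eventually.of_forall fun v => ?_)
    subst hg hP
    exact hmin k v
  have hcoef : 1 / μ - 5 * L / (2 * μ ^ 2) - 2 * L * (B ^ 2 - 1) / μ ^ 2 ≤
      1 / μ - 2 * L / μ ^ 2 := by
    have hB2 : 0 ≤ L * (B ^ 2 - 1) := mul_nonneg hL.le (sub_nonneg.2 (one_le_pow₀ hB))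
    have : 0 ≤ (L / 2 + 2 * (L * (B ^ 2 - 1))) / μ ^ 2 := by positivity
    linarith [show 1 / μ - 5 * L / (2 * μ ^ 2) - 2 * L * (B ^ 2 - 1) / μ ^ 2 =
      1 / μ - 2 * L / μ ^ 2 - (L / 2 + 2 * (L * (B ^ 2 - 1))) / μ ^ 2 by ring]
  have hdecrease : ∑ k, p k * f (wbar k) ≤ f w₀ -
      (1 / μ - 5 * L / (2 * μ ^ 2) - 2 * L * (B ^ 2 - 1) / μ ^ 2) * ‖gradient f w₀‖ ^ 2 :=
    sum_mul_le_of_forall_le (fun k _ => hp k) hpsum fun k _ => (hdevice k).trans (by gcongr)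
  refine ⟨hdecrease, fun hμB => ?_⟩
  have hcoef_eq : (6 * B ^ 2 - 1) / (50 * L * B ^ 4) =
      1 / μ - 5 * L / (2 * μ ^ 2) - 2 * L * (B ^ 2 - 1) / μ ^ 2 := by
    subst hμB
    field_simp
    ring
  rwa [hcoef_eq]

/-- one-step decrease for exact FedDANE with a single selected
device, convex case.  Each `F k` is convex with `L`-Lipschitz gradient, `f` has
`L`-Lipschitz gradient, `∑ k, p k ‖∇F_k(w₀)‖² ≤ B² ‖∇f(w₀)‖²`, and with the exact
full gradient `g = ∇f(w₀)`, `w̲_k` exactly minimizes the FedDANE subproblem of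
device `k`.  Then
`∑ k, p k f(w̲_k) ≤ f(w₀) - (1/μ - 5L/(2μ²) - 2L(B²-1)/μ²)‖∇f(w₀)‖²`;
in particular, if `μ = 5LB²` then
`∑ k, p k f(w̲_k) ≤ f(w₀) - ((6B²-1)/(50LB⁴))‖∇f(w₀)‖²`. -/
theorem feddane_exact_one_step_decrease {d N : ℕ}
    (F : Fin N → EuclideanSpace ℝ (Fin d) → ℝ) (hF : ∀ k, ContDiff ℝ 1 (F k))
    (p : Fin N → ℝ) (hp : ∀ k, 0 ≤ p k) (hpsum : ∑ k, p k = 1)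
    (f : EuclideanSpace ℝ (Fin d) → ℝ) (hf : f = fun w => ∑ k, p k * F k w)
    (w₀ : EuclideanSpace ℝ (Fin d)) (μ L B : ℝ)
    (hμ : 0 < μ) (hL : 0 < L) (hB : 1 ≤ B)
    (hconv : ∀ k, ConvexOn ℝ Set.univ (F k))
    (hFlip : ∀ k x y, ‖gradient (F k) x - gradient (F k) y‖ ≤ L * ‖x - y‖)
    (hflip : ∀ x y, ‖gradient f x - gradient f y‖ ≤ L * ‖x - y‖)
    (hdissim : ∑ k, p k * ‖gradient (F k) w₀‖ ^ 2 ≤ B ^ 2 * ‖gradient f w₀‖ ^ 2)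
    (g : EuclideanSpace ℝ (Fin d)) (hg : g = gradient f w₀)
    (P : Fin N → EuclideanSpace ℝ (Fin d) → ℝ)
    (hP : P = fun k w =>
      F k w + ⟪g - gradient (F k) w₀, w - w₀⟫ + μ / 2 * ‖w - w₀‖ ^ 2)
    (wbar : Fin N → EuclideanSpace ℝ (Fin d))
    (hmin : ∀ k v, P k (wbar k) ≤ P k v) :
    (∑ k, p k * f (wbar k)) ≤
        f w₀ - (1 / μ - 5 * L / (2 * μ ^ 2) - 2 * L * (B ^ 2 - 1) / μ ^ 2) *
          ‖gradient f w₀‖ ^ 2 ∧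
      (μ = 5 * L * B ^ 2 →
        (∑ k, p k * f (wbar k)) ≤
          f w₀ - (6 * B ^ 2 - 1) / (50 * L * B ^ 4) * ‖gradient f w₀‖ ^ 2) :=
  feddane_exact_one_step_decrease_general F hF p hp hpsum f hf w₀ μ L B hμ hL hB hconv hFlip hflip g
    hg P hP wbar hmin
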